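/- arXiv:1502.06236 — 6 statements merged into one kernel-verified Lean document; each statement's English description precedes it below -/
import Mathlib

section
/- If two points p, q in ℤ² are 4-adjacent (coordinates equal in one position and differing by exactly 1 in the other), then the map f(x,y) = (x+y, x−y) sends them to 8-adjacent points (distinct points whose coordinates differ by at most 1 in each position), and conversely if f(p) and f(q) are 8-adjacent then p and q are 4-adjacent. -/
/-- 4-adjacency in ℤ²: coordinates agree in one position and differ by 1 in the other. -/
def Adj4 (p q : ℤ × ℤ) : Prop :=
  (p.1 = q.1 ∧ |p.2 - q.2| = 1) ∨ (p.2 = q.2 ∧ |p.1 - q.1| = 1)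

/-- 8-adjacency in ℤ²: distinct points whose coordinates differ by at most 1. -/
def Adj8 (p q : ℤ × ℤ) : Prop :=
  p ≠ q ∧ |p.1 - q.1| ≤ 1 ∧ |p.2 - q.2| ≤ 1

theorem adj4_iff_adj8_image (p q : ℤ × ℤ) :
    Adj4 p q ↔ Adj8 (p.1 + p.2, p.1 - p.2) (q.1 + q.2, q.1 - q.2) := by
  simp only [Adj4, Adj8, Prod.mk.injEq, ne_eq, not_and, abs_le,
    abs_eq (by norm_num : (0:ℤ) ≤ 1)]
  omega
end

section
/- For every finite subset X of ℤ², there is a subset Y of ℤ² such that the digital image (X, 4-adjacency) is isomorphic to the digital image (Y, 8-adjacency); i.e., there is a bijection X → Y such that two points of X are 4-adjacent if and only if their images are 8-adjacent. -/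
private def rot (p : ℤ × ℤ) : ℤ × ℤ := (p.1 + p.2, p.1 - p.2)

private lemma rot_inj : Function.Injective rot := by
  intro p q h
  simp only [rot, Prod.ext_iff] at h ⊢
  omega

private lemma adj_rot (p q : ℤ × ℤ) : Adj4 p q ↔ Adj8 (rot p) (rot q) := by
  simp only [Adj4, Adj8, rot, ne_eq, Prod.ext_iff, Int.abs_eq_natAbs]
  omega

theorem four_adjacency_image_iso_eight_adjacency (X : Set (ℤ × ℤ)) (hX : X.Finite) :
    ∃ (Y : Set (ℤ × ℤ)) (e : X ≃ Y),
      ∀ p q : X, Adj4 (p : ℤ × ℤ) (q : ℤ × ℤ) ↔ Adj8 ((e p) : ℤ × ℤ) ((e q) : ℤ × ℤ) := by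
  refine ⟨rot '' X, Equiv.Set.image rot X rot_inj, fun p q => ?_⟩
  simpa using adj_rot p q
end

section
/- If a finite digital image (X, κ) is homotopy equivalent to a digital image with strictly fewer points, then there is a proper subset Y ⊊ X such that (X, κ) is homotopy equivalent to (Y, κ) with the same adjacency relation restricted to Y. -/
def DCont {X Y : Type*} (κ : X → X → Prop) (lam : Y → Y → Prop) (f : X → Y) : Prop :=
  ∀ a b, κ a b → f a = f b ∨ lam (f a) (f b)

def DHomotopic {X Y : Type*} (κ : X → X → Prop) (lam : Y → Y → Prop) (f g : X → Y) : Prop :=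
  ∃ (k : ℕ) (H : X → ℕ → Y),
    (∀ x, H x 0 = f x) ∧ (∀ x, H x k = g x) ∧
    (∀ t, t ≤ k → DCont κ lam (fun x => H x t)) ∧
    (∀ x t, t < k → H x t = H x (t + 1) ∨ lam (H x t) (H x (t + 1)))

def HtpyEquiv {X Y : Type*} (κ : X → X → Prop) (lam : Y → Y → Prop) : Prop :=
  ∃ (f : X → Y) (g : Y → X), DCont κ lam f ∧ DCont lam κ g ∧
    DHomotopic κ κ (g ∘ f) id ∧ DHomotopic lam lam (f ∘ g) id

section Aux

variable {X Y Z : Type*}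

lemma dcont_id (κ : X → X → Prop) : DCont κ κ id := fun _ _ h => Or.inr h

lemma dcont_comp {κ : X → X → Prop} {lam : Y → Y → Prop} {μ : Z → Z → Prop}
    {f : X → Y} {g : Y → Z} (hf : DCont κ lam f) (hg : DCont lam μ g) :
    DCont κ μ (g ∘ f) := by
  intro a b hab
  rcases hf a b hab with h | h
  · exact Or.inl (by simp [Function.comp, h])
  · exact hg _ _ h

lemma dcont_iterate {κ : X → X → Prop} {r : X → X} (hr : DCont κ κ r) (n : ℕ) :
    DCont κ κ (r^[n]) := by
  induction n with
  | zero => simpa using dcont_id κ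
  | succ n ih => rw [Function.iterate_succ']; exact dcont_comp ih hr

lemma dhomotopic_refl (κ : X → X → Prop) (lam : Y → Y → Prop) {f : X → Y}
    (hf : DCont κ lam f) : DHomotopic κ lam f f :=
  ⟨0, fun x _ => f x, fun _ => rfl, fun _ => rfl, fun _ _ => hf,
    fun _ t ht => absurd ht (Nat.not_lt_zero t)⟩

lemma dhomotopic_trans {κ : X → X → Prop} {lam : Y → Y → Prop} {f g h : X → Y}
    (h1 : DHomotopic κ lam f g) (h2 : DHomotopic κ lam g h) :
    DHomotopic κ lam f h := by
  obtain ⟨k1, H1, H10, H1k, H1c, H1s⟩ := h1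
  obtain ⟨k2, H2, H20, H2k, H2c, H2s⟩ := h2
  refine ⟨k1 + k2, fun x t => if t ≤ k1 then H1 x t else H2 x (t - k1), ?_, ?_, ?_, ?_⟩
  · intro x; simp [H10]
  · intro x
    by_cases hk2 : k2 = 0
    · subst hk2
      simp only [Nat.add_zero, le_refl, if_pos]
      rw [H1k, ← H20, H2k]
    · have hne : ¬ (k1 + k2 ≤ k1) := by omega
      simp only [if_neg hne, Nat.add_sub_cancel_left]
      exact H2k x
  · intro t ht
    by_cases hle : t ≤ k1
    · simp only [if_pos hle]; exact H1c t hle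
    · simp only [if_neg hle]; exact H2c (t - k1) (by omega)
  · intro x t ht
    by_cases hA : t + 1 ≤ k1
    · simp only [if_pos hA, if_pos (by omega : t ≤ k1)]
      exact H1s x t (by omega)
    · by_cases hB : t ≤ k1
      · have htk : t = k1 := by omega
        simp only [if_pos hB, if_neg hA]
        have h1 : t + 1 - k1 = 1 := by omega
        rw [h1, htk, H1k, ← H20]
        exact H2s x 0 (by omega)
      · simp only [if_neg hB, if_neg hA]
        have h1 : t + 1 - k1 = (t - k1) + 1 := by omega
        rw [h1]
        exact H2s x (t - k1) (by omega)

lemma dhomotopic_comp_left {κ : X → X → Prop} {lam : Y → Y → Prop} {μ : Z → Z → Prop}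
    {f g : X → Y} {p : Y → Z} (hp : DCont lam μ p) (hfg : DHomotopic κ lam f g) :
    DHomotopic κ μ (p ∘ f) (p ∘ g) := by
  obtain ⟨k, H, H0, Hk, Hc, Hs⟩ := hfg
  refine ⟨k, fun x t => p (H x t), fun x => by simp [H0], fun x => by simp [Hk], ?_, ?_⟩
  · intro t ht; exact dcont_comp (Hc t ht) hp
  · intro x t ht
    rcases Hs x t ht with h | h
    · exact Or.inl (congrArg p h)
    · rcases hp _ _ h with h' | h'
      · exact Or.inl h'
      · exact Or.inr h'

lemma iterate_dhomotopic_id {κ : X → X → Prop} {r : X → X} (hr : DCont κ κ r)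
    (h : DHomotopic κ κ r id) (n : ℕ) : DHomotopic κ κ (r^[n]) id := by
  induction n with
  | zero => simpa using dhomotopic_refl κ κ (dcont_id κ)
  | succ n ih =>
    rw [Function.iterate_succ']
    have := dhomotopic_comp_left hr ih
    rw [Function.comp_id] at this
    exact dhomotopic_trans this h

lemma exists_idem_iterate {X : Type*} [Finite X] (r : X → X) :
    ∃ n, 1 ≤ n ∧ r^[n] ∘ r^[n] = r^[n] := by
  obtain ⟨a, b, hab, he⟩ := Finite.exists_ne_map_eq_of_infinite (fun n : ℕ => r^[n])
  wlog hlt : a < b generalizing a b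
  · exact this b a hab.symm he.symm (by omega)
  have he' : r^[a] = r^[b] := he
  set m := a with hm
  set d := b - a with hd
  have hd1 : 1 ≤ d := by omega
  have B : ∀ e, r^[m + e + d] = r^[m + e] := by
    intro e
    have h1 : r^[m + e + d] = r^[e] ∘ r^[m + d] := by
      rw [show m + e + d = e + (m + d) from by omega, Function.iterate_add]
    rw [h1, show m + d = b from by omega, ← he', ← Function.iterate_add,
      show e + m = m + e from by omega]
  have C : ∀ k e, r^[m + e + k * d] = r^[m + e] := by
    intro k
    induction k with
    | zero => simp
    | succ k ih =>
      intro e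
      have h1 : m + e + (k + 1) * d = m + (e + k * d) + d := by ring
      rw [h1, B (e + k * d), show m + (e + k * d) = m + e + k * d from by ring, ih e]
  set n := d * (m + 1) with hn
  have hmn : m + 1 ≤ n := Nat.le_mul_of_pos_left (m + 1) (by omega)
  refine ⟨n, by omega, ?_⟩
  have h2 : n = (m + 1) * d := by rw [hn, mul_comm]
  have key : r^[n + n] = r^[n] := by
    have h1 : n + n = m + (n - m) + (m + 1) * d := by rw [← h2]; omega
    rw [h1, C (m + 1) (n - m), show m + (n - m) = n from by omega]
  rw [← Function.iterate_add, key]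

end Aux

theorem reducible_to_subset {X Z : Type*} [Fintype X] [Fintype Z]
    (κ : X → X → Prop) (κ' : Z → Z → Prop)
    (hκs : Symmetric κ) (hκi : Irreflexive κ)
    (hκ's : Symmetric κ') (hκ'i : Irreflexive κ')
    (hcard : Fintype.card Z < Fintype.card X)
    (h : HtpyEquiv κ κ') :
    ∃ Y : Set X, Y ≠ Set.univ ∧
      HtpyEquiv κ (fun a b : Y => κ (a : X) (b : X)) := by
  obtain ⟨f, g, hf, hg, hgf, hfg⟩ := h
  have hr : DCont κ κ (g ∘ f) := dcont_comp hf hg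
  obtain ⟨n, hn1, hidem⟩ := exists_idem_iterate (g ∘ f)
  refine ⟨Set.range ((g ∘ f)^[n]), ?_, ?_⟩
  · intro hY
    have hsurj : Function.Surjective ((g ∘ f)^[n]) := by
      rw [← Set.range_eq_univ]; exact hY
    have hgs : Function.Surjective g := by
      intro x
      obtain ⟨y, hy⟩ := hsurj x
      obtain ⟨m, hm⟩ : ∃ m, n = m + 1 := ⟨n - 1, by omega⟩
      refine ⟨f ((g ∘ f)^[m] y), ?_⟩
      have h1 : (g ∘ f)^[n] y = g (f ((g ∘ f)^[m] y)) := by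
        rw [hm, Function.iterate_succ']; rfl
      rw [← h1]; exact hy
    exact absurd (Fintype.card_le_of_surjective g hgs) (by omega)
  · refine ⟨fun x => ⟨(g ∘ f)^[n] x, Set.mem_range_self x⟩, fun y => (y : X), ?_, ?_, ?_, ?_⟩
    · intro a b hab
      rcases dcont_iterate hr n a b hab with h' | h'
      · exact Or.inl (Subtype.ext h')
      · exact Or.inr h'
    · intro a b hab; exact Or.inr hab
    · have heq : (fun y : Set.range ((g ∘ f)^[n]) => (y : X)) ∘
          (fun x => (⟨(g ∘ f)^[n] x, Set.mem_range_self x⟩ : Set.range ((g ∘ f)^[n]))) =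
          (g ∘ f)^[n] := rfl
      rw [heq]
      exact iterate_dhomotopic_id hr hgf n
    · have heq : (fun x => (⟨(g ∘ f)^[n] (x : X), Set.mem_range_self _⟩ :
          Set.range ((g ∘ f)^[n]))) ∘ (fun y : Set.range ((g ∘ f)^[n]) => (y : X)) = id := by
        funext y
        apply Subtype.ext
        obtain ⟨x, hx⟩ := y.2
        show (g ∘ f)^[n] (y : X) = (y : X)
        rw [← hx]
        exact congrFun hidem x
      rw [heq]
      exact dhomotopic_refl _ _ (dcont_id _)
end

section
/- If the identity map of a finite digital image X is homotopic in one step to a non-surjective continuous map h : X → X, then X is homotopy equivalent to the proper subset Y = h(X) (with the restricted adjacency relation). -/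
/-- Homotopic in one step: both maps continuous and pointwise equal-or-adjacent. -/
def OneStepHomotopic {X Y : Type*} (κ : X → X → Prop) (lam : Y → Y → Prop)
    (f g : X → Y) : Prop :=
  DCont κ lam f ∧ DCont κ lam g ∧ ∀ x, f x = g x ∨ lam (f x) (g x)

theorem htpyEquiv_range_of_oneStep {X : Type*} [Fintype X]
    (κ : X → X → Prop) (hκs : Symmetric κ) (hκi : Irreflexive κ)
    (h : X → X) (hcont : DCont κ κ h)
    (hstep : OneStepHomotopic κ κ id h)
    (hnsurj : ¬ Function.Surjective h) :
    HtpyEquiv κ (fun a b : Set.range h => κ (a : X) (b : X)) := by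
  obtain ⟨_, _, hadj⟩ := hstep
  refine ⟨fun x => ⟨h x, ⟨x, rfl⟩⟩, fun y => (y : X), ?_, ?_, ?_, ?_⟩
  · intro a b hab
    rcases hcont a b hab with he | hk
    · exact Or.inl (Subtype.ext he)
    · exact Or.inr hk
  · intro a b hab
    exact Or.inr hab
  · refine ⟨1, fun x t => if t = 0 then h x else x, fun x => rfl, fun x => rfl, ?_, ?_⟩
    · intro t _
      rcases Nat.eq_zero_or_pos t with rfl | ht
      · simpa using hcont
      · have : t ≠ 0 := Nat.pos_iff_ne_zero.mp ht
        simp only [this, if_false]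
        intro a b hab; exact Or.inr hab
    · intro x t ht
      interval_cases t
      simp only [if_pos rfl, one_ne_zero, if_false]
      rcases hadj x with he | hk
      · exact Or.inl he.symm
      · exact Or.inr (hκs hk)
  · refine ⟨1, fun y t => if t = 0 then ⟨h y, ⟨y, rfl⟩⟩ else y, fun y => rfl,
      fun y => rfl, ?_, ?_⟩
    · intro t _
      rcases Nat.eq_zero_or_pos t with rfl | ht
      · intro a b hab
        simp only [if_pos rfl]
        rcases hcont a b hab with he | hk
        · exact Or.inl (Subtype.ext he)
        · exact Or.inr hk
      · have : t ≠ 0 := Nat.pos_iff_ne_zero.mp ht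
        simp only [this, if_false]
        intro a b hab; exact Or.inr hab
    · intro y t ht
      interval_cases t
      simp only [if_pos rfl, one_ne_zero, if_false]
      rcases hadj (y : X) with he | hk
      · exact Or.inl (Subtype.ext he.symm)
      · exact Or.inr (hκs hk)
end

section
/- For n ≥ 5, the digital cycle C_n is not rigid: the rotation map r(i) = i+1 (mod n) is continuous and digitally homotopic to the identity map, yet is not the identity. -/
/-- Adjacency in the digital cycle C_n on ℤ/nℤ: j = i ± 1 (mod n). -/
def CycleAdj (n : ℕ) (i j : ZMod n) : Prop := j = i + 1 ∨ j = i - 1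

theorem cycle_not_rigid (n : ℕ) (hn : 5 ≤ n) :
    DCont (CycleAdj n) (CycleAdj n) (fun i : ZMod n => i + 1) ∧
    DHomotopic (CycleAdj n) (CycleAdj n) (fun i : ZMod n => i + 1) id ∧
    (fun i : ZMod n => i + 1) ≠ id := by
  haveI : Fact (1 < n) := ⟨by omega⟩
  have hrot : DCont (CycleAdj n) (CycleAdj n) (fun i : ZMod n => i + 1) := by
    intro a b hab
    rcases hab with h | h
    · exact Or.inr (Or.inl (by rw [h]))
    · exact Or.inr (Or.inr (by rw [h]; ring))
  refine ⟨hrot, ?_, ?_⟩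
  · refine ⟨1, fun x t => if t = 0 then x + 1 else x, fun x => rfl, fun x => rfl, ?_, ?_⟩
    · intro t ht
      by_cases h0 : t = 0
      · simpa [h0] using hrot
      · simp only [h0, if_false]
        intro a b hab
        rcases hab with h | h
        · exact Or.inr (Or.inl h)
        · exact Or.inr (Or.inr h)
    · intro x t ht
      interval_cases t
      exact Or.inr (Or.inr (by simp))
  · intro h
    have := congrFun h 0
    simp at this
end

section
/- For n ≥ 3, any subset of ℤ² that is pairwise 8-adjacent has at most 4 points; in particular, the complete graph K₅ is not realizable as the adjacency graph of a digital image in ℤ² with 8-adjacency. -/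
theorem pairwise_adj8_card_le_four :
    (∀ S : Finset (ℤ × ℤ), (∀ p ∈ S, ∀ q ∈ S, p ≠ q → Adj8 p q) → S.card ≤ 4) ∧
    ¬ ∃ S : Finset (ℤ × ℤ), S.card = 5 ∧ ∀ p ∈ S, ∀ q ∈ S, p ≠ q → Adj8 p q := by
  have h1 : ∀ S : Finset (ℤ × ℤ), (∀ p ∈ S, ∀ q ∈ S, p ≠ q → Adj8 p q) → S.card ≤ 4 := by
    intro S hS
    rcases S.eq_empty_or_nonempty with rfl | hne
    · simp
    obtain ⟨a, ha, hmin1⟩ := S.exists_min_image Prod.fst hne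
    obtain ⟨b, hb, hmin2⟩ := S.exists_min_image Prod.snd hne
    have hsub : S ⊆ ({a.1, a.1 + 1} ×ˢ {b.2, b.2 + 1} : Finset (ℤ × ℤ)) := by
      intro q hq
      simp only [Finset.mem_product, Finset.mem_insert, Finset.mem_singleton]
      constructor
      · rcases eq_or_ne q a with rfl | hne'
        · left; rfl
        · have h := (hS q hq a ha hne').2.1
          rw [abs_le] at h
          have := hmin1 q hq
          omega
      · rcases eq_or_ne q b with rfl | hne'
        · left; rfl
        · have h := (hS q hq b hb hne').2.2
          rw [abs_le] at h
          have := hmin2 q hq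
          omega
    calc S.card ≤ _ := Finset.card_le_card hsub
      _ ≤ 4 := by
          rw [Finset.card_product]
          have h1 : ({a.1, a.1 + 1} : Finset ℤ).card ≤ 2 :=
            (Finset.card_insert_le _ _).trans (by simp)
          have h2 : ({b.2, b.2 + 1} : Finset ℤ).card ≤ 2 :=
            (Finset.card_insert_le _ _).trans (by simp)
          calc _ ≤ 2 * 2 := Nat.mul_le_mul h1 h2
            _ = 4 := rfl
  refine ⟨h1, ?_⟩
  rintro ⟨S, hcard, hS⟩
  have := h1 S hS
  omega
end
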